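/- Let s ≥ 1 be an integer, let P_1,…,P_s ∈ ℂ[x] be polynomials with exactly k_1,…,k_s ≥ 2 nonzero coefficients respectively, and suppose C_1,…,C_s > 0 are constants with μ_1(S(P_i,t)) ≤ C_i · t^{1/(k_i−1)} for all t > 0 and all i. Then for all 0 < y_1,…,y_s ≤ 1: 0 ≤ ∫_{S(P_1,y_1) ∩ ⋯ ∩ S(P_s,y_s)} ( −max_{1≤i≤s} log|P_i(x)| ) dx/x ≤ (2π)^{1−1/s} · ( C_1 · I_{s,k_1}(y_1) ⋯ C_s · I_{s,k_s}(y_s) )^{1/s²}. -/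

import Mathlib

open MeasureTheory Polynomial Real

/-- `S(P,y) = {z ∈ 𝕋 : |P(z)| < y}`. -/
def S1 (P : Polynomial ℂ) (y : ℝ) : Set ℂ :=
  {z : ℂ | ‖z‖ = 1 ∧ ‖P.eval z‖ < y}

/-- Arc-length measure on the unit circle, via the parametrization `θ ∈ (0,2π] ↦ e^{iθ}`. -/
noncomputable def mu1 (A : Set ℂ) : ENNReal :=
  volume {θ : ℝ | θ ∈ Set.Ioc (0:ℝ) (2*π) ∧ Complex.exp ((θ:ℂ) * Complex.I) ∈ A}

/-- `∫_A f(x) dx/x := ∫_0^{2π} 1_A(e^{iθ}) f(e^{iθ}) dθ`. -/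
noncomputable def circleIntOn (A : Set ℂ) (f : ℂ → ℝ) : ℝ :=
  ∫ θ in (0:ℝ)..(2*π), Set.indicator A f (Complex.exp ((θ:ℂ) * Complex.I))

/-- `J_{ℓ,δ}(y) := (−1)^ℓ δ ∫_0^y (log z)^ℓ z^{δ−1} dz`. -/
noncomputable def J (ℓ : ℕ) (δ y : ℝ) : ℝ :=
  (-1:ℝ)^ℓ * δ * ∫ z in (0:ℝ)..y, (Real.log z)^ℓ * z ^ (δ - 1)

/-- `I_{ℓ,k}(y) := J_{ℓ,1/(k−1)}(y)`. -/
noncomputable def Ifun (ℓ k : ℕ) (y : ℝ) : ℝ := J ℓ (1/((k:ℝ)-1)) y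

/-!
On the intersection `T` of the sublevel sets, `h := -max_i log|P_i|` is nonnegative and
`h ≤ -log|P_i|` for every `i`, so `h ≤ ∏_i (1_{S(P_i,y_i)} (-log|P_i|)^s)^{1/s²}`. Hölder's
inequality with exponents `1 - 1/s, 1/s², …, 1/s²`, the first one for the constant function `1`,
bounds `∫_T h` by `(2π)^{1-1/s} ∏_i (∫_{S(P_i,y_i)} (-log|P_i|)^s)^{1/s²}`. In the layer-cake
formula for the `i`-th integral, the level set `{-log|P_i| > t} ∩ S(P_i,y_i)` lies in
`S(P_i, min(y_i, e^{-t}))`, so the integral is at most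
`C_i ∫_0^∞ min(y_i, e^{-t})^δ s t^{s-1} dt`, which equals `C_i I_{s,k_i}(y_i)` by the
substitution `z = e^{-t}` in `J` and one integration by parts.
-/

open Set Filter

section LogPowerIntegral

variable {δ : ℝ}

lemma integral_add_one_mul_pow (n : ℕ) (u : ℝ) :
    ∫ t in (0 : ℝ)..u, (n + 1) * t ^ n = u ^ (n + 1) := by
  rw [intervalIntegral.integral_const_mul, integral_pow]
  field_simp
  simp

lemma integrableOn_Ioi_pow_mul_exp_neg_mul (n : ℕ) (hδ : 0 < δ) (a : ℝ) :
    IntegrableOn (fun t : ℝ => t ^ n * exp (-δ * t)) (Ioi a) := by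
  refine integrable_of_isBigO_exp_neg (half_pos hδ) (by fun_prop) ?_
  have hdecay : Tendsto (fun t : ℝ => t ^ n * exp (-(δ / 2) * t)) atTop (nhds 0) := by
    simpa [Real.rpow_natCast] using
      tendsto_rpow_mul_exp_neg_mul_atTop_nhds_zero n (δ / 2) (half_pos hδ)
  have hsplit : (fun t : ℝ => t ^ n * exp (-δ * t))
      = fun t => t ^ n * exp (-(δ / 2) * t) * exp (-(δ / 2) * t) := by
    funext t
    rw [mul_assoc, ← exp_add]
    ring_nf
  rw [hsplit]
  simpa using (hdecay.isBigO_one ℝ).mul (Asymptotics.isBigO_refl _ atTop)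

lemma mul_integral_Ioi_pow_succ_mul_exp_neg_mul (n : ℕ) (hδ : 0 < δ) (a : ℝ) :
    δ * ∫ t in Ioi a, t ^ (n + 1) * exp (-δ * t)
      = a ^ (n + 1) * exp (-δ * a) + (n + 1) * ∫ t in Ioi a, t ^ n * exp (-δ * t) := by
  have hint := integrableOn_Ioi_pow_mul_exp_neg_mul (n + 1) hδ a
  have hint' := integrableOn_Ioi_pow_mul_exp_neg_mul n hδ a
  have hderiv : ∀ t ∈ Ici a, HasDerivAt (fun t : ℝ => -(t ^ (n + 1) * exp (-δ * t)))
      (δ * (t ^ (n + 1) * exp (-δ * t)) - (n + 1) * (t ^ n * exp (-δ * t))) t := by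
    intro t _
    refine ((hasDerivAt_pow (n + 1) t).mul ((hasDerivAt_id t).const_mul (-δ)).exp).neg
      |>.congr_deriv ?_
    simp only [Nat.add_sub_cancel, id_eq, mul_one]
    push_cast
    ring
  have hlim : Tendsto (fun t : ℝ => -(t ^ (n + 1) * exp (-δ * t))) atTop (nhds 0) := by
    have := (tendsto_rpow_mul_exp_neg_mul_atTop_nhds_zero ((n + 1 : ℕ) : ℝ) δ hδ).neg
    simp only [Real.rpow_natCast, neg_mul] at this ⊢
    simpa using this
  have hftc := integral_Ioi_of_hasDerivAt_of_tendsto' hderiv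
    ((hint.const_mul δ).sub (hint'.const_mul (n + 1))) hlim
  rw [integral_sub (hint.const_mul δ) (hint'.const_mul (n + 1)), integral_const_mul,
    integral_const_mul] at hftc
  linarith

lemma J_eq_mul_integral_Ioi (ℓ : ℕ) {y : ℝ} (hy : 0 < y) :
    J ℓ δ y = δ * ∫ t in Ioi (-log y), t ^ ℓ * exp (-δ * t) := by
  have himage : (fun t : ℝ => exp (-t)) '' Ioi (-log y) = Ioo 0 y := by
    ext z
    constructor
    · rintro ⟨t, ht, rfl⟩
      refine ⟨exp_pos _, ?_⟩
      rw [← exp_log hy, exp_lt_exp]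
      linarith [mem_Ioi.mp ht]
    · rintro ⟨hz0, hzy⟩
      refine ⟨-log z, ?_, by simp [exp_log hz0]⟩
      simpa using log_lt_log hz0 hzy
  have hderiv : ∀ t ∈ Ioi (-log y),
      HasDerivWithinAt (fun t : ℝ => exp (-t)) (-exp (-t)) (Ioi (-log y)) t :=
    fun t _ => by simpa using (hasDerivAt_neg t).exp.hasDerivWithinAt
  have hsubst := integral_image_eq_integral_abs_deriv_smul measurableSet_Ioi hderiv
    (exp_injective.comp neg_injective).injOn fun z => log z ^ ℓ * z ^ (δ - 1)
  have hintegrand : ∀ t : ℝ, |-exp (-t)| • (log (exp (-t)) ^ ℓ * exp (-t) ^ (δ - 1))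
      = (-1) ^ ℓ * (t ^ ℓ * exp (-δ * t)) := by
    intro t
    rw [abs_neg, abs_of_pos (exp_pos _), log_exp, smul_eq_mul,
      rpow_def_of_pos (exp_pos _), log_exp, neg_pow]
    have hexp : exp (-t) * exp (-t * (δ - 1)) = exp (-δ * t) := by
      rw [← exp_add]; ring_nf
    linear_combination ((-1) ^ ℓ * t ^ ℓ) * hexp
  rw [himage] at hsubst
  simp only [hintegrand, integral_const_mul] at hsubst
  rw [J, intervalIntegral.integral_of_le hy.le, integral_Ioc_eq_integral_Ioo, hsubst,
    ← mul_assoc, mul_right_comm _ δ, ← pow_add, Even.neg_one_pow ⟨ℓ, rfl⟩, one_mul]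

lemma J_nonneg (ℓ : ℕ) (hδ : 0 ≤ δ) {y : ℝ} (hy : 0 < y) (hy1 : y ≤ 1) : 0 ≤ J ℓ δ y := by
  rw [J_eq_mul_integral_Ioi ℓ hy]
  have hlog : 0 ≤ -log y := neg_nonneg.mpr (log_nonpos hy.le hy1)
  refine mul_nonneg hδ (setIntegral_nonneg measurableSet_Ioi fun t ht => ?_)
  have : 0 ≤ t := hlog.trans (le_of_lt ht)
  positivity

lemma min_exp_neg_eq_left {y t : ℝ} (hy : 0 < y) (ht : t ≤ -log y) : min y (exp (-t)) = y :=
  min_eq_left <| by rw [← exp_log hy, exp_le_exp]; linarith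

lemma min_exp_neg_eq_right {y t : ℝ} (hy : 0 < y) (ht : -log y ≤ t) :
    min y (exp (-t)) = exp (-t) :=
  min_eq_right <| by rw [← exp_log hy, exp_le_exp]; linarith

lemma exp_neg_rpow (t : ℝ) : exp (-t) ^ δ = exp (-δ * t) := by
  rw [← exp_mul]; ring_nf

variable (n : ℕ) {y : ℝ}

lemma integrableOn_Ioi_min_exp_neg_rpow_mul_pow (hδ : 0 < δ) (hy : 0 < y) (hy1 : y ≤ 1) :
    IntegrableOn (fun t => min y (exp (-t)) ^ δ * ((n + 1) * t ^ n)) (Ioi 0) := by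
  have hlog : 0 ≤ -log y := neg_nonneg.mpr (log_nonpos hy.le hy1)
  rw [← Ioc_union_Ioi_eq_Ioi hlog]
  refine IntegrableOn.union (Continuous.integrableOn_Ioc ?_) ?_
  · exact ((continuous_const.min (by fun_prop)).rpow_const
      fun t => Or.inl (lt_min hy (exp_pos _)).ne').mul (by fun_prop)
  · refine IntegrableOn.congr_fun ((integrableOn_Ioi_pow_mul_exp_neg_mul n hδ _).const_mul
      (n + 1)) (fun t ht => ?_) measurableSet_Ioi
    rw [min_exp_neg_eq_right hy (le_of_lt ht), exp_neg_rpow]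
    ring

lemma integral_Ioi_min_exp_neg_rpow_mul_pow (hδ : 0 < δ) (hy : 0 < y) (hy1 : y ≤ 1) :
    ∫ t in Ioi 0, min y (exp (-t)) ^ δ * ((n + 1) * t ^ n) = J (n + 1) δ y := by
  have hlog : 0 ≤ -log y := neg_nonneg.mpr (log_nonpos hy.le hy1)
  have hint := integrableOn_Ioi_min_exp_neg_rpow_mul_pow n hδ hy hy1
  rw [← Ioc_union_Ioi_eq_Ioi hlog] at hint ⊢
  rw [setIntegral_union (Ioc_disjoint_Ioi le_rfl) measurableSet_Ioi
    (hint.mono_set subset_union_left) (hint.mono_set subset_union_right)]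
  have hbelow : ∫ t in Ioc 0 (-log y), min y (exp (-t)) ^ δ * ((n + 1) * t ^ n)
      = y ^ δ * (-log y) ^ (n + 1) := by
    rw [setIntegral_congr_fun measurableSet_Ioc
      fun t ht => by rw [min_exp_neg_eq_left hy ht.2], ← intervalIntegral.integral_of_le hlog,
      intervalIntegral.integral_const_mul, integral_add_one_mul_pow]
  have habove : ∫ t in Ioi (-log y), min y (exp (-t)) ^ δ * ((n + 1) * t ^ n)
      = (n + 1) * ∫ t in Ioi (-log y), t ^ n * exp (-δ * t) := by
    rw [← integral_const_mul]
    refine setIntegral_congr_fun measurableSet_Ioi fun t ht => ?_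
    rw [min_exp_neg_eq_right hy (le_of_lt ht), exp_neg_rpow]
    ring
  have hy_rpow : exp (-δ * -log y) = y ^ δ := by
    rw [rpow_def_of_pos hy]; ring_nf
  rw [hbelow, habove, J_eq_mul_integral_Ioi (n + 1) hy,
    mul_integral_Ioi_pow_succ_mul_exp_neg_mul n hδ, hy_rpow]
  ring

end LogPowerIntegral

section LayerCake

variable {α : Type*} [MeasurableSpace α] (μ : Measure α) {q : α → ℝ} {δ c y : ℝ}

lemma lt_min_exp_neg_of_lt_neg_log {u t : ℝ} (hu : 0 ≤ u) (huy : u < y) (ht : t < -log u) :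
    u < min y (exp (-t)) := by
  refine lt_min huy ?_
  rcases hu.eq_or_lt with rfl | hu
  · exact exp_pos _
  · rw [← log_lt_iff_lt_exp hu]; linarith

lemma setLIntegral_neg_log_pow_le (n : ℕ) (hq : Measurable q) (hq0 : ∀ x, 0 ≤ q x)
    (hδ : 0 < δ) (hc : 0 ≤ c) (hy : 0 < y) (hy1 : y ≤ 1)
    (hbd : ∀ t, 0 < t → μ {x | q x < t} ≤ ENNReal.ofReal (c * t ^ δ)) :
    ∫⁻ x in {x | q x < y}, ENNReal.ofReal ((-log (q x)) ^ (n + 1)) ∂μ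
      ≤ ENNReal.ofReal (c * J (n + 1) δ y) := by
  have hsub : MeasurableSet {x | q x < y} := measurableSet_lt hq measurable_const
  have hcake := lintegral_comp_eq_lintegral_meas_lt_mul (μ.restrict {x | q x < y})
    (f := fun x => -log (q x)) (g := fun t => (n + 1) * t ^ n)
    (ae_restrict_of_forall_mem hsub fun x hx =>
      neg_nonneg.mpr (log_nonpos (hq0 x) ((le_of_lt hx).trans hy1)))
    (measurable_log.comp hq).neg.aemeasurable
    (fun t _ => (by fun_prop : Continuous fun u : ℝ => (n + 1) * u ^ n).intervalIntegrable 0 t)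
    (ae_restrict_of_forall_mem measurableSet_Ioi fun t ht => by
      have : (0 : ℝ) < t := ht
      positivity)
  simp only [integral_add_one_mul_pow] at hcake
  have hlevel : ∀ t ∈ Ioi (0 : ℝ), μ.restrict {x | q x < y} {x | t < -log (q x)}
      ≤ ENNReal.ofReal (c * min y (exp (-t)) ^ δ) := fun t _ => by
    rw [Measure.restrict_apply' hsub]
    refine le_trans (measure_mono fun x hx => ?_) (hbd _ (lt_min hy (exp_pos _)))
    exact lt_min_exp_neg_of_lt_neg_log (hq0 x) hx.2 hx.1
  have hmin_nonneg : ∀ t, 0 ≤ min y (exp (-t)) ^ δ := fun t =>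
    rpow_nonneg (le_min hy.le (exp_pos _).le) δ
  calc ∫⁻ x in {x | q x < y}, ENNReal.ofReal ((-log (q x)) ^ (n + 1)) ∂μ
      ≤ ∫⁻ t in Ioi 0, ENNReal.ofReal (c * min y (exp (-t)) ^ δ)
          * ENNReal.ofReal ((n + 1) * t ^ n) := by
        rw [hcake]
        exact setLIntegral_mono' measurableSet_Ioi fun t ht => mul_le_mul_left (hlevel t ht) _
    _ = ENNReal.ofReal (∫ t in Ioi 0, c * (min y (exp (-t)) ^ δ * ((n + 1) * t ^ n))) := by
        rw [ofReal_integral_eq_lintegral_ofReal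
          ((integrableOn_Ioi_min_exp_neg_rpow_mul_pow n hδ hy hy1).const_mul c)
          (ae_restrict_of_forall_mem measurableSet_Ioi fun t ht => by
            have : (0 : ℝ) < t := ht
            have := hmin_nonneg t
            positivity)]
        refine lintegral_congr fun t => ?_
        rw [← ENNReal.ofReal_mul (mul_nonneg hc (hmin_nonneg t)), mul_assoc]
    _ = ENNReal.ofReal (c * J (n + 1) δ y) := by
        rw [integral_const_mul, integral_Ioi_min_exp_neg_rpow_mul_pow n hδ hy hy1]

end LayerCake

namespace ENNReal

variable {α ι : Type*} [MeasurableSpace α] {μ : Measure α} [Fintype ι]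

theorem lintegral_prod_rpow_le_measure_univ_rpow_mul {f : ι → α → ℝ≥0∞}
    (hf : ∀ i, AEMeasurable (f i) μ) {p : ι → ℝ} (hp0 : ∀ i, 0 ≤ p i) (hp : ∑ i, p i ≤ 1) :
    ∫⁻ a, ∏ i, f i a ^ p i ∂μ ≤ μ univ ^ (1 - ∑ i, p i) * ∏ i, (∫⁻ a, f i a ∂μ) ^ p i := by
  have hholder := lintegral_prod_norm_pow_le (μ := μ) (Finset.univ : Finset (Option ι))
    (f := fun o => o.elim 1 f) (p := fun o => o.elim (1 - ∑ i, p i) p)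
    (by rintro (_ | i) _
        exacts [aemeasurable_const, hf i])
    (by simp [Fintype.sum_option])
    (by rintro (_ | i) _
        exacts [sub_nonneg.mpr hp, hp0 i])
  simpa [Fintype.prod_option, lintegral_one] using hholder

lemma le_prod_rpow_of_pow_card_le [Nonempty ι] {a : ℝ≥0∞} {b : ι → ℝ≥0∞}
    (h : ∀ i, a ^ Fintype.card ι ≤ b i) : a ≤ ∏ i, b i ^ (1 / (Fintype.card ι : ℝ) ^ 2) := by
  have hcard : (Fintype.card ι : ℝ) ≠ 0 := by positivity
  calc a = ∏ _i : ι, (a ^ Fintype.card ι) ^ (1 / (Fintype.card ι : ℝ) ^ 2) := by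
        rw [Finset.prod_const, Finset.card_univ, ← rpow_natCast, ← rpow_mul, ← rpow_natCast,
          ← rpow_mul]
        field_simp
        rw [rpow_one]
    _ ≤ ∏ i, b i ^ (1 / (Fintype.card ι : ℝ) ^ 2) :=
        Finset.prod_le_prod' fun i _ => rpow_le_rpow (h i) (by positivity)

end ENNReal

section SublevelIntersection

variable {α ι : Type*} [Fintype ι] (hι : (Finset.univ : Finset ι).Nonempty) {q : ι → α → ℝ}
  {y : ι → ℝ}

lemma neg_sup'_log_nonneg (hq0 : ∀ i x, 0 ≤ q i x) (hy1 : ∀ i, y i ≤ 1) {x : α}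
    (hx : x ∈ ⋂ i, {x | q i x < y i}) : 0 ≤ -Finset.univ.sup' hι fun i => log (q i x) :=
  neg_nonneg.mpr <| Finset.sup'_le _ _ fun i _ =>
    log_nonpos (hq0 i x) ((le_of_lt (mem_iInter.mp hx i)).trans (hy1 i))

lemma ofReal_neg_sup'_log_le_prod (hq0 : ∀ i x, 0 ≤ q i x) (hy1 : ∀ i, y i ≤ 1) {x : α}
    (hx : x ∈ ⋂ i, {x | q i x < y i}) :
    ENNReal.ofReal (-Finset.univ.sup' hι fun i => log (q i x))
      ≤ ∏ i, {x | q i x < y i}.indicator (fun x => ENNReal.ofReal ((-log (q i x)) ^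
          Fintype.card ι)) x ^ (1 / (Fintype.card ι : ℝ) ^ 2) := by
  have : Nonempty ι := hι.to_type
  refine ENNReal.le_prod_rpow_of_pow_card_le fun i => ?_
  have hh := neg_sup'_log_nonneg hι hq0 hy1 hx
  have hle : (-Finset.univ.sup' hι fun i => log (q i x)) ≤ -log (q i x) :=
    neg_le_neg (Finset.le_sup' (fun j => log (q j x)) (Finset.mem_univ i))
  rw [indicator_of_mem (mem_iInter.mp hx i), ← ENNReal.ofReal_pow hh]
  exact ENNReal.ofReal_le_ofReal (pow_le_pow_left₀ hh hle _)

variable [MeasurableSpace α] (μ : Measure α) {δ c : ι → ℝ}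

lemma measurable_neg_sup'_log (hq : ∀ i, Measurable (q i)) :
    Measurable fun x => -Finset.univ.sup' hι fun i => log (q i x) := by
  have := (Finset.measurable_sup' hι fun i _ => measurable_log.comp (hq i)).neg
  convert this using 2 with x
  simp [Finset.sup'_apply]

theorem setLIntegral_neg_sup'_log_le (hq : ∀ i, Measurable (q i))
    (hq0 : ∀ i x, 0 ≤ q i x) (hδ : ∀ i, 0 < δ i) (hc : ∀ i, 0 ≤ c i) (hy : ∀ i, 0 < y i)
    (hy1 : ∀ i, y i ≤ 1)
    (hbd : ∀ i t, 0 < t → μ {x | q i x < t} ≤ ENNReal.ofReal (c i * t ^ δ i)) :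
    ∫⁻ x in ⋂ i, {x | q i x < y i}, ENNReal.ofReal (-Finset.univ.sup' hι fun i => log (q i x)) ∂μ
      ≤ μ univ ^ (1 - 1 / (Fintype.card ι : ℝ)) * ∏ i, ENNReal.ofReal
          (c i * J (Fintype.card ι) (δ i) (y i)) ^ (1 / (Fintype.card ι : ℝ) ^ 2) := by
  set s := Fintype.card ι
  obtain ⟨n, hn⟩ : ∃ n, s = n + 1 := Nat.exists_eq_succ_of_ne_zero hι.card_pos.ne'
  have hs : (1 : ℝ) ≤ s := by exact_mod_cast hι.card_pos
  have hexp_sum : ∑ _i : ι, 1 / (s : ℝ) ^ 2 = 1 / (s : ℝ) := by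
    rw [Finset.sum_const, Finset.card_univ, nsmul_eq_mul]
    field_simp
    rfl
  have hT_meas : ∀ i, MeasurableSet {x | q i x < y i} :=
    fun i => measurableSet_lt (hq i) measurable_const
  calc _ ≤ ∫⁻ x, ∏ i, {x | q i x < y i}.indicator (fun x => ENNReal.ofReal ((-log (q i x)) ^ s))
          x ^ (1 / (s : ℝ) ^ 2) ∂μ :=
        (setLIntegral_mono' (MeasurableSet.iInter hT_meas) fun x hx =>
          ofReal_neg_sup'_log_le_prod hι hq0 hy1 hx).trans (setLIntegral_le_lintegral _ _)
    _ ≤ μ univ ^ (1 - 1 / (s : ℝ)) * ∏ i, (∫⁻ x in {x | q i x < y i},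
          ENNReal.ofReal ((-log (q i x)) ^ s) ∂μ) ^ (1 / (s : ℝ) ^ 2) := by
        simp only [← lintegral_indicator (hT_meas _), ← hexp_sum]
        refine ENNReal.lintegral_prod_rpow_le_measure_univ_rpow_mul (fun i => ?_)
          (fun i => by positivity) (hexp_sum ▸ div_le_one_of_le₀ hs (by positivity))
        exact ((ENNReal.measurable_ofReal.comp
          ((measurable_log.comp (hq i)).neg.pow_const s)).indicator (hT_meas i)).aemeasurable
    _ ≤ _ := by
        gcongr with i
        rw [hn]
        exact setLIntegral_neg_log_pow_le μ n (hq i) (hq0 i) (hδ i) (hc i) (hy i) (hy1 i) (hbd i)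

theorem setIntegral_neg_sup'_log_le [IsFiniteMeasure μ] (hq : ∀ i, Measurable (q i))
    (hq0 : ∀ i x, 0 ≤ q i x) (hδ : ∀ i, 0 < δ i) (hc : ∀ i, 0 ≤ c i) (hy : ∀ i, 0 < y i)
    (hy1 : ∀ i, y i ≤ 1)
    (hbd : ∀ i t, 0 < t → μ {x | q i x < t} ≤ ENNReal.ofReal (c i * t ^ δ i)) :
    ∫ x in ⋂ i, {x | q i x < y i}, -Finset.univ.sup' hι (fun i => log (q i x)) ∂μ
      ≤ μ.real univ ^ (1 - 1 / (Fintype.card ι : ℝ))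
        * ∏ i, (c i * J (Fintype.card ι) (δ i) (y i)) ^ (1 / (Fintype.card ι : ℝ) ^ 2) := by
  have hs : 1 / (Fintype.card ι : ℝ) ≤ 1 :=
    div_le_one_of_le₀ (by exact_mod_cast hι.card_pos) (by positivity)
  have hJ : ∀ i, 0 ≤ c i * J (Fintype.card ι) (δ i) (y i) :=
    fun i => mul_nonneg (hc i) (J_nonneg _ (hδ i).le (hy i) (hy1 i))
  have hmeasT : MeasurableSet (⋂ i, {x | q i x < y i}) :=
    MeasurableSet.iInter fun i => measurableSet_lt (hq i) measurable_const
  rw [integral_eq_lintegral_of_nonneg_ae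
    (ae_restrict_of_forall_mem hmeasT fun x hx => neg_sup'_log_nonneg hι hq0 hy1 hx)
    (measurable_neg_sup'_log hι hq).aestronglyMeasurable]
  refine ENNReal.toReal_le_of_le_ofReal (mul_nonneg (rpow_nonneg measureReal_nonneg _)
    (Finset.prod_nonneg fun i _ => rpow_nonneg (hJ i) _)) ?_
  refine (setLIntegral_neg_sup'_log_le hι μ hq hq0 hδ hc hy hy1 hbd).trans_eq ?_
  rw [ENNReal.ofReal_mul (rpow_nonneg measureReal_nonneg _), ENNReal.ofReal_prod_of_nonneg
    fun i _ => rpow_nonneg (hJ i) _, ← ENNReal.ofReal_rpow_of_nonneg measureReal_nonneg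
    (sub_nonneg.mpr hs), ofReal_measureReal (measure_ne_top μ univ)]
  congr 1
  exact Finset.prod_congr rfl fun i _ => ENNReal.ofReal_rpow_of_nonneg (hJ i) (by positivity)

end SublevelIntersection

lemma mu1_eq_volume_preimage (A : Set ℂ) :
    mu1 A = volume.restrict (Ioc 0 (2 * π))
      ((fun θ : ℝ => Complex.exp (θ * Complex.I)) ⁻¹' A) := by
  rw [Measure.restrict_apply' measurableSet_Ioc, mu1, inter_comm]
  rfl

lemma circleIntOn_eq_setIntegral {A : Set ℂ}
    (hA : MeasurableSet ((fun θ : ℝ => Complex.exp (θ * Complex.I)) ⁻¹' A)) (f : ℂ → ℝ) :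
    circleIntOn A f = ∫ θ in (fun θ : ℝ => Complex.exp (θ * Complex.I)) ⁻¹' A,
      f (Complex.exp (θ * Complex.I)) ∂volume.restrict (Ioc 0 (2 * π)) := by
  rw [circleIntOn, intervalIntegral.integral_of_le (by positivity), ← integral_indicator hA]
  rfl

lemma preimage_S1 (P : Polynomial ℂ) (t : ℝ) :
    (fun θ : ℝ => Complex.exp (θ * Complex.I)) ⁻¹' S1 P t
      = {θ : ℝ | ‖P.eval (Complex.exp (θ * Complex.I))‖ < t} := by
  ext θ
  simp [S1, Complex.norm_exp_ofReal_mul_I]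

theorem max_log_integral_intersection_bound_general
    (s : ℕ) (hs : 0 < s)
    (P : Fin s → Polynomial ℂ) (k : Fin s → ℕ) (hk : ∀ i, 2 ≤ k i)
    (C : Fin s → ℝ) (hC : ∀ i, 0 < C i)
    (hμ : ∀ i, ∀ t : ℝ, 0 < t →
      mu1 (S1 (P i) t) ≤ ENNReal.ofReal (C i * t ^ ((1:ℝ)/((k i : ℝ)-1))))
    (y : Fin s → ℝ) (hy : ∀ i, 0 < y i) (hy1 : ∀ i, y i ≤ 1) :
    0 ≤ circleIntOn (⋂ i, S1 (P i) (y i))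
          (fun z => -(Finset.univ.sup' ⟨⟨0, hs⟩, Finset.mem_univ _⟩
            (fun i => Real.log ‖(P i).eval z‖))) ∧
      circleIntOn (⋂ i, S1 (P i) (y i))
          (fun z => -(Finset.univ.sup' ⟨⟨0, hs⟩, Finset.mem_univ _⟩
            (fun i => Real.log ‖(P i).eval z‖)))
        ≤ (2*π) ^ ((1:ℝ) - 1/(s:ℝ)) *
            (∏ i, C i * Ifun s (k i) (y i)) ^ ((1:ℝ)/((s:ℝ)^2)) := by
  set q : Fin s → ℝ → ℝ := fun i θ => ‖(P i).eval (Complex.exp (θ * Complex.I))‖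
  have hq : ∀ i, Measurable (q i) := fun i => by fun_prop
  have hδ : ∀ i, 0 < 1 / ((k i : ℝ) - 1) := fun i => by
    have : (2 : ℝ) ≤ k i := by exact_mod_cast hk i
    exact one_div_pos.mpr (by linarith)
  have hpre : (fun θ : ℝ => Complex.exp (θ * Complex.I)) ⁻¹' ⋂ i, S1 (P i) (y i)
      = ⋂ i, {θ | q i θ < y i} := by
    simp only [preimage_iInter, preimage_S1, q]
  have hT : MeasurableSet (⋂ i, {θ | q i θ < y i}) :=
    MeasurableSet.iInter fun i => measurableSet_lt (hq i) measurable_const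
  have hbd : ∀ i t, 0 < t → volume.restrict (Ioc 0 (2 * π)) {θ | q i θ < t}
      ≤ ENNReal.ofReal (C i * t ^ (1 / ((k i : ℝ) - 1))) := fun i t ht => by
    simpa only [mu1_eq_volume_preimage, preimage_S1] using hμ i t ht
  rw [circleIntOn_eq_setIntegral (hpre ▸ hT), hpre]
  refine ⟨setIntegral_nonneg hT fun θ hθ =>
    neg_sup'_log_nonneg (q := q) _ (fun i θ => norm_nonneg _) hy1 hθ, ?_⟩
  have hbound := setIntegral_neg_sup'_log_le ⟨⟨0, hs⟩, Finset.mem_univ _⟩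
    (volume.restrict (Ioc 0 (2 * π))) hq (fun i θ => norm_nonneg _) hδ (fun i => (hC i).le) hy
    hy1 hbd
  rw [Fintype.card_fin, measureReal_restrict_apply_univ, Real.volume_real_Ioc_of_le
    (by positivity), sub_zero] at hbound
  refine hbound.trans_eq ?_
  rw [Real.finsetProd_rpow _ _ fun i _ =>
    mul_nonneg (hC i).le (J_nonneg s (hδ i).le (hy i) (hy1 i))]
  rfl

/-- Bound for `− max_{1≤i≤s} log|P_i|` integrated over `S(P_1,y_1) ∩ ⋯ ∩ S(P_s,y_s)`. -/
theorem max_log_integral_intersection_bound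
    (s : ℕ) (hs : 0 < s)
    (P : Fin s → Polynomial ℂ) (k : Fin s → ℕ) (hk : ∀ i, 2 ≤ k i)
    (hsupp : ∀ i, (P i).support.card = k i)
    (C : Fin s → ℝ) (hC : ∀ i, 0 < C i)
    (hμ : ∀ i, ∀ t : ℝ, 0 < t →
      mu1 (S1 (P i) t) ≤ ENNReal.ofReal (C i * t ^ ((1:ℝ)/((k i : ℝ)-1))))
    (y : Fin s → ℝ) (hy : ∀ i, 0 < y i) (hy1 : ∀ i, y i ≤ 1) :
    0 ≤ circleIntOn (⋂ i, S1 (P i) (y i))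
          (fun z => -(Finset.univ.sup' ⟨⟨0, hs⟩, Finset.mem_univ _⟩
            (fun i => Real.log ‖(P i).eval z‖))) ∧
      circleIntOn (⋂ i, S1 (P i) (y i))
          (fun z => -(Finset.univ.sup' ⟨⟨0, hs⟩, Finset.mem_univ _⟩
            (fun i => Real.log ‖(P i).eval z‖)))
        ≤ (2*π) ^ ((1:ℝ) - 1/(s:ℝ)) *
            (∏ i, C i * Ifun s (k i) (y i)) ^ ((1:ℝ)/((s:ℝ)^2)) :=
  max_log_integral_intersection_bound_general s hs P k hk C hC hμ y hy hy1
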